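/- arXiv:0711.4841 — 2 statements merged into one kernel-verified Lean document; each statement's English description precedes it below -/
import Mathlib

section
/- Define u(n,k) as the number of partitions of [n] into an unordered set of noncrossing lists such that the list containing n has length k. Then u(n,k) = k! * sum over weak compositions (b_1,...,b_k) of n-k of u(b_1)...u(b_k), where u(m) = sum_j u(m,j) for m ≥ 1 and u(0) = 1. -/
/-- Partitions of `[n]` into a set of noncrossing lists. -/
def SetOfNCLists (n : ℕ) : Type :=
  {S : Finset (List (Fin n)) // (∀ l ∈ S, l ≠ [] ∧ l.Nodup) ∧
    (∀ x : Fin n, ∃! l, l ∈ S ∧ x ∈ l) ∧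
    ¬ ∃ a b c d : Fin n, a < b ∧ b < c ∧ c < d ∧
      ∃ l₁ ∈ S, ∃ l₂ ∈ S, l₁ ≠ l₂ ∧ a ∈ l₁ ∧ c ∈ l₁ ∧ b ∈ l₂ ∧ d ∈ l₂}

/-- `u n` is the total number of partitions of `[n]` into sets of noncrossing
lists; `u 0 = 1`. -/
noncomputable def u (n : ℕ) : ℕ := Nat.card (SetOfNCLists n)

/-- `uk n k` counts those partitions of `[n]` into sets of noncrossing lists in
which the list containing the largest element has length `k` (here the ground set
is `Fin (n+1)`, representing `[n+1]`, with largest element `Fin.last n`). -/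
noncomputable def uk (n k : ℕ) : ℕ :=
  Nat.card {S : SetOfNCLists (n + 1) //
    ∃ l ∈ S.1, Fin.last n ∈ l ∧ l.length = k}

/-
Let `L` be the block through the largest point, with points `s₁ < ⋯ < s_k = n`, and put `s₀ = 0`.
Two points of another block on different sides of some `sᵢ` would cross `L`, so every other block
lies in one of the gaps `(s_{i-1}, sᵢ)`. A partition is therefore the same as the gap sizes `bᵢ`
(a weak composition of `n - k`), an ordering of the points of `L` (`k!` choices), and an arbitrary
partition of each gap into noncrossing lists (`u(bᵢ)` choices). The gaps are handled through the
composition of `n` with parts `bᵢ + 1`, whose blocks end at the `sᵢ`.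
-/

open Finset

instance (n : ℕ) : Finite (SetOfNCLists n) := by
  refine Finite.of_injective
    (fun S : SetOfNCLists n => {l : {l : List (Fin n) // l.Nodup} | l.1 ∈ S.1}) ?_
  intro S₁ S₂ h
  refine Subtype.ext (Finset.ext fun l => ?_)
  by_cases hl : l.Nodup
  · exact Set.ext_iff.1 h ⟨l, hl⟩
  · exact iff_of_false (fun h' => hl (S₁.2.1 l h').2) (fun h' => hl (S₂.2.1 l h').2)

theorem Finset.natCard_nodup_toFinset_eq_factorial {α : Type*} [DecidableEq α] (A : Finset α) :
    Nat.card {L : List α // L.Nodup ∧ L.toFinset = A} = (#A).factorial := by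
  have hperm : ∀ L : List α, L.Nodup ∧ L.toFinset = A ↔ L ∈ A.toList.permutations := by
    intro L
    rw [List.mem_permutations]
    constructor
    · rintro ⟨hL, rfl⟩
      exact (List.perm_ext_iff_of_nodup hL (Finset.nodup_toList _)).2 (by simp)
    · intro h
      refine ⟨h.nodup_iff.2 (Finset.nodup_toList _), ?_⟩
      rw [List.toFinset_eq_of_perm _ _ h, Finset.toList_toFinset]
  rw [Nat.card_congr (Equiv.subtypeEquivRight fun L => (hperm L).trans List.mem_toFinset.symm),
    Nat.card_eq_fintype_card, Fintype.card_coe,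
    List.toFinset_card_of_nodup (List.nodup_permutations _ (Finset.nodup_toList _)),
    List.length_permutations, Finset.length_toList]

namespace SetOfNCLists

variable {m N : ℕ}

noncomputable def comap (S : SetOfNCLists N) (f : Fin m ↪o Fin N)
    (hS : ∀ l ∈ S.1, ∀ x ∈ l, ∀ y ∈ l, x ∈ Set.range f → y ∈ Set.range f) : SetOfNCLists m :=
  ⟨S.1.preimage (List.map f) (List.map_injective_iff.2 f.injective).injOn, by
    intro l hl
    obtain ⟨hne, hnd⟩ := S.2.1 _ (mem_preimage.1 hl)
    exact ⟨fun h => hne (by rw [h, List.map_nil]), hnd.of_map f⟩, by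
    intro x
    obtain ⟨l, ⟨hl, hxl⟩, huniq⟩ := S.2.2.1 (f x)
    obtain ⟨l', rfl⟩ : l ∈ Set.range (List.map f) := by
      rw [Set.range_list_map]
      exact fun y hy => hS l hl (f x) hxl y hy ⟨x, rfl⟩
    refine ⟨l', ⟨mem_preimage.2 hl, (List.mem_map_of_injective f.injective).1 hxl⟩, ?_⟩
    rintro l'' ⟨hl'', hxl''⟩
    exact List.map_injective_iff.2 f.injective
      (huniq _ ⟨mem_preimage.1 hl'', List.mem_map_of_mem hxl''⟩), by
    rintro ⟨a, b, c, d, hab, hbc, hcd, l₁, h₁, l₂, h₂, hne, ha, hc, hb, hd⟩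
    exact S.2.2.2 ⟨f a, f b, f c, f d,
      f.lt_iff_lt.2 hab, f.lt_iff_lt.2 hbc, f.lt_iff_lt.2 hcd,
      l₁.map f, mem_preimage.1 h₁, l₂.map f, mem_preimage.1 h₂,
      fun h => hne (List.map_injective_iff.2 f.injective h),
      List.mem_map_of_mem ha, List.mem_map_of_mem hc, List.mem_map_of_mem hb,
      List.mem_map_of_mem hd⟩⟩

theorem mem_comap {S : SetOfNCLists N} {f : Fin m ↪o Fin N} {hS} {l : List (Fin m)} :
    l ∈ (S.comap f hS).1 ↔ l.map f ∈ S.1 :=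
  mem_preimage (hf := (List.map_injective_iff.2 f.injective).injOn)

end SetOfNCLists

namespace Composition

section

variable {n : ℕ} (c : Composition n)

theorem index_mono : Monotone c.index := by
  intro x y hxy
  by_contra! h
  have hy := c.lt_sizeUpTo_index_succ y
  have hx := c.sizeUpTo_index_le x
  have hsize := c.monotone_sizeUpTo (Nat.succ_le_of_lt h)
  rw [Fin.le_def] at hxy
  simp only [Fin.val_succ, Nat.succ_eq_add_one] at hy hsize
  omega

-- The blocks of `c` end at the points `blockLast i` (the spine); the other points of block `i`
-- form its gap, a copy of `Fin (c.blocksFun i - 1)`.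
def blockLast (i : Fin c.length) : Fin n :=
  c.embedding i ⟨c.blocksFun i - 1, Nat.sub_lt (c.one_le_blocksFun i) one_pos⟩

def gapEmbedding (i : Fin c.length) : Fin (c.blocksFun i - 1) ↪o Fin n :=
  (Fin.castLEOrderEmb (Nat.sub_le _ _)).trans (c.embedding i)

def spine : Finset (Fin n) := univ.image c.blockLast

@[simp] theorem index_blockLast (i : Fin c.length) : c.index (c.blockLast i) = i :=
  c.index_embedding _ _

@[simp] theorem index_gapEmbedding (i : Fin c.length) (y : Fin (c.blocksFun i - 1)) :
    c.index (c.gapEmbedding i y) = i :=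
  c.index_embedding _ _

theorem le_blockLast_index (x : Fin n) : x ≤ c.blockLast (c.index x) := by
  have h := c.lt_sizeUpTo_index_succ x
  rw [Fin.val_succ, c.sizeUpTo_succ'] at h
  simp only [Fin.le_def, blockLast, coe_embedding]
  omega

theorem gapEmbedding_lt_blockLast (i : Fin c.length) (y : Fin (c.blocksFun i - 1)) :
    c.gapEmbedding i y < c.blockLast i :=
  (c.embedding i).lt_iff_lt.2 (Fin.lt_def.2 y.2)

theorem blockLast_injective : Function.Injective c.blockLast :=
  Function.LeftInverse.injective c.index_blockLast

theorem card_spine : #c.spine = c.length := by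
  rw [spine, card_image_of_injective _ c.blockLast_injective, card_univ, Fintype.card_fin]

theorem mem_spine {x : Fin n} : x ∈ c.spine ↔ c.blockLast (c.index x) = x := by
  simp only [spine, mem_image, mem_univ, true_and]
  exact ⟨fun ⟨i, hi⟩ => hi ▸ by rw [index_blockLast], fun h => ⟨_, h⟩⟩

theorem mem_range_gapEmbedding {x : Fin n} {i : Fin c.length} :
    x ∈ Set.range (c.gapEmbedding i) ↔ c.index x = i ∧ x ∉ c.spine := by
  rw [mem_spine]
  constructor
  · rintro ⟨y, rfl⟩
    rw [index_gapEmbedding]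
    exact ⟨rfl, (c.gapEmbedding_lt_blockLast i y).ne'⟩
  · rintro ⟨rfl, hx⟩
    refine ⟨⟨c.invEmbedding x, ?_⟩, ?_⟩
    · refine lt_of_le_of_ne (Nat.le_sub_one_of_lt (c.invEmbedding x).2) fun h => hx ?_
      conv_rhs => rw [← c.embedding_comp_inv x]
      exact congrArg (c.embedding _) (Fin.ext h.symm)
    · exact c.embedding_comp_inv x

theorem boundary_succ (i : Fin c.length) : c.boundary i.succ = (c.blockLast i).succ := by
  have := c.one_le_blocksFun i
  simp only [Fin.ext_iff, boundary, blockLast, OrderEmbedding.coe_ofStrictMono, Fin.val_succ,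
    coe_embedding, c.sizeUpTo_succ']
  omega

theorem boundaries_eq_insert_zero_map_spine :
    c.boundaries = insert 0 (c.spine.map (Fin.succEmb n)) := by
  ext x
  simp [boundaries, spine, Fin.exists_fin_succ, boundary_succ, eq_comm]

theorem index_eq_of_lt_of_lt {x y z : Fin n} (hxy : x < y) (hyz : y < z)
    (hxz : c.index x = c.index z) : c.index y = c.index x :=
  le_antisymm (hxz ▸ c.index_mono hyz.le) (c.index_mono hxy.le)

theorem lt_of_index_lt {x y : Fin n} (h : c.index x < c.index y) : x < y :=
  lt_of_not_ge fun hyx => (c.index_mono hyx).not_gt h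

theorem le_of_mem_spine {x y : Fin n} (hx : x ∈ c.spine) (h : c.index y = c.index x) :
    y ≤ x := by
  rw [← c.mem_spine.1 hx, ← h]
  exact c.le_blockLast_index y

theorem lt_blockLast_index {x : Fin n} (hx : x ∉ c.spine) : x < c.blockLast (c.index x) :=
  (c.le_blockLast_index x).lt_of_ne fun h => hx (c.mem_spine.2 h.symm)

theorem index_map_gapEmbedding {i : Fin c.length} {l : List (Fin (c.blocksFun i - 1))}
    {x : Fin n} (hx : x ∈ l.map (c.gapEmbedding i)) : c.index x = i ∧ x ∉ c.spine := by
  obtain ⟨y, -, rfl⟩ := List.mem_map.1 hx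
  exact c.mem_range_gapEmbedding.1 ⟨y, rfl⟩

theorem spine_injective : Function.Injective (spine : Composition n → Finset (Fin n)) := by
  intro c₁ c₂ h
  refine (compositionEquiv n).injective (CompositionAsSet.ext ?_)
  change c₁.boundaries = c₂.boundaries
  rw [boundaries_eq_insert_zero_map_spine, boundaries_eq_insert_zero_map_spine, h]

end

variable {n : ℕ}

theorem last_mem_spine (c : Composition (n + 1)) : Fin.last n ∈ c.spine := by
  have h := c.toCompositionAsSet.getLast_mem
  change Fin.last (n + 1) ∈ c.boundaries at h
  simpa [boundaries_eq_insert_zero_map_spine, ← Fin.succ_last] using h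

theorem exists_spine_eq {A : Finset (Fin (n + 1))} (hA : Fin.last n ∈ A) :
    ∃ c : Composition (n + 1), c.spine = A := by
  let d : CompositionAsSet (n + 1) :=
    ⟨insert 0 (A.map (Fin.succEmb _)), mem_insert_self _ _,
      by simpa [← Fin.succ_last] using hA⟩
  refine ⟨d.toComposition, Finset.ext fun x => ?_⟩
  have h := d.toComposition_boundaries
  rw [boundaries_eq_insert_zero_map_spine] at h
  simpa [d, Fin.succ_ne_zero] using congrArg (x.succ ∈ ·) h

theorem prod_blocksFun {M : Type*} [CommMonoid M] {N : ℕ} (c : Composition N) (g : ℕ → M) :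
    ∏ i, g (c.blocksFun i) = (c.blocks.map g).prod := by
  conv_rhs => rw [← c.ofFn_blocksFun]
  rw [List.map_ofFn, List.prod_ofFn]
  rfl

def ofAntidiagonalTuple {N k : ℕ} (hk : k ≤ N) (b : Finset.Nat.antidiagonalTuple k (N - k)) :
    {c : Composition N // c.length = k} :=
  ⟨⟨List.ofFn fun i => b.1 i + 1, by simp, by
    have := Finset.Nat.mem_antidiagonalTuple.1 b.2
    simp only [List.sum_ofFn, Finset.sum_add_distrib, this, Finset.sum_const, Finset.card_univ,
      Fintype.card_fin, smul_eq_mul, mul_one]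
    omega⟩, List.length_ofFn⟩

theorem ofAntidiagonalTuple_bijective {N k : ℕ} (hk : k ≤ N) :
    Function.Bijective (ofAntidiagonalTuple hk) := by
  refine ⟨fun b b' h => ?_, ?_⟩
  · have h' := List.ofFn_injective (congrArg (fun c => c.1.blocks) h)
    exact Subtype.ext (funext fun i => Nat.add_right_cancel (congrFun h' i))
  · rintro ⟨c, rfl⟩
    have hsum : ∑ i, (c.blocksFun i - 1) = N - c.length := by
      have h : ∑ i, (c.blocksFun i - 1 + 1) = N := by
        refine (Finset.sum_congr rfl fun i _ => ?_).trans c.sum_blocksFun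
        exact Nat.sub_add_cancel (c.one_le_blocksFun i)
      rw [Finset.sum_add_distrib, Finset.sum_const, Finset.card_univ, Fintype.card_fin,
        smul_eq_mul, mul_one] at h
      omega
    refine ⟨⟨fun i => c.blocksFun i - 1, Finset.Nat.mem_antidiagonalTuple.2 hsum⟩,
      Subtype.ext (Composition.ext ?_)⟩
    conv_rhs => rw [← c.ofFn_blocksFun]
    exact congrArg List.ofFn (funext fun i => Nat.sub_add_cancel (c.one_le_blocksFun i))

theorem sum_prod_blocksFun_sub_one {M : Type*} [CommSemiring M] (f : ℕ → M) {N k : ℕ}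
    (hk : k ≤ N) :
    ∑ c : {c : Composition N // c.length = k}, ∏ i, f (c.1.blocksFun i - 1) =
      ∑ b ∈ Finset.Nat.antidiagonalTuple k (N - k), ∏ i, f (b i) := by
  rw [← Finset.sum_coe_sort (Finset.Nat.antidiagonalTuple k (N - k))]
  refine (Fintype.sum_bijective _ (ofAntidiagonalTuple_bijective hk) _ _ fun b => ?_).symm
  rw [prod_blocksFun (g := fun m => f (m - 1))]
  simp [ofAntidiagonalTuple, List.prod_ofFn]

section Glue

variable (c : Composition (n + 1))

def glueLists (L : List (Fin (n + 1))) (T : ∀ i, SetOfNCLists (c.blocksFun i - 1)) :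
    Finset (List (Fin (n + 1))) :=
  insert L (univ.biUnion fun i => (T i).1.image (List.map (c.gapEmbedding i)))

variable {c} {L : List (Fin (n + 1))} {T : ∀ i, SetOfNCLists (c.blocksFun i - 1)}

theorem mem_glueLists {l : List (Fin (n + 1))} :
    l ∈ c.glueLists L T ↔ l = L ∨ ∃ i, ∃ l' ∈ (T i).1, l'.map (c.gapEmbedding i) = l := by
  simp [glueLists]

theorem glueLists_ne_nil_nodup (hL : L.Nodup ∧ L.toFinset = c.spine) :
    ∀ l ∈ c.glueLists L T, l ≠ [] ∧ l.Nodup := by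
  intro l hl
  rcases mem_glueLists.1 hl with rfl | ⟨i, l', hl', rfl⟩
  · refine ⟨List.ne_nil_of_mem (a := Fin.last n) ?_, hL.1⟩
    rw [← List.mem_toFinset, hL.2]
    exact c.last_mem_spine
  · obtain ⟨hne, hnd⟩ := (T i).2.1 l' hl'
    exact ⟨by simpa using hne, hnd.map (c.gapEmbedding i).injective⟩

theorem existsUnique_mem_glueLists (hL : L.toFinset = c.spine) (x : Fin (n + 1)) :
    ∃! l, l ∈ c.glueLists L T ∧ x ∈ l := by
  by_cases hx : x ∈ c.spine
  · refine ⟨L, ⟨mem_insert_self _ _, by rwa [← List.mem_toFinset, hL]⟩, ?_⟩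
    rintro l ⟨hl, hxl⟩
    rcases mem_glueLists.1 hl with rfl | ⟨i, l', -, rfl⟩
    · rfl
    · exact absurd hx (c.index_map_gapEmbedding hxl).2
  · obtain ⟨y, hy⟩ := c.mem_range_gapEmbedding.2 ⟨rfl, hx⟩
    obtain ⟨l', ⟨hl', hyl'⟩, huniq⟩ := (T (c.index x)).2.2.1 y
    refine ⟨l'.map (c.gapEmbedding _), ⟨mem_glueLists.2 (Or.inr ⟨_, l', hl', rfl⟩),
      List.mem_map.2 ⟨y, hyl', hy⟩⟩, ?_⟩
    rintro l ⟨hl, hxl⟩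
    rcases mem_glueLists.1 hl with rfl | ⟨i, l'', hl'', rfl⟩
    · exact absurd (List.mem_toFinset.2 hxl) (hL ▸ hx)
    · obtain ⟨rfl, -⟩ := c.index_map_gapEmbedding hxl
      obtain ⟨y'', hy''l, hy''⟩ := List.mem_map.1 hxl
      rw [(c.gapEmbedding _).injective (hy''.trans hy.symm)] at hy''l
      rw [huniq l'' ⟨hl'', hy''l⟩]

theorem not_crossing_glueLists (hL : L.toFinset = c.spine) :
    ¬ ∃ p q r s : Fin (n + 1), p < q ∧ q < r ∧ r < s ∧ ∃ l₁ ∈ c.glueLists L T,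
      ∃ l₂ ∈ c.glueLists L T, l₁ ≠ l₂ ∧ p ∈ l₁ ∧ r ∈ l₁ ∧ q ∈ l₂ ∧ s ∈ l₂ := by
  have hspine : ∀ {x}, x ∈ L → x ∈ c.spine := fun hx => hL ▸ List.mem_toFinset.2 hx
  rintro ⟨p, q, r, s, hpq, hqr, hrs, l₁, h₁, l₂, h₂, hne, hp, hr, hq, hs⟩
  rcases mem_glueLists.1 h₁ with rfl | ⟨i, l₁', hl₁', rfl⟩ <;>
    rcases mem_glueLists.1 h₂ with rfl | ⟨j, l₂', hl₂', rfl⟩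
  · exact hne rfl
  · obtain ⟨hqj, -⟩ := c.index_map_gapEmbedding hq
    obtain ⟨hsj, -⟩ := c.index_map_gapEmbedding hs
    have hrq := c.index_eq_of_lt_of_lt hqr hrs (hqj.trans hsj.symm)
    exact (c.le_of_mem_spine (hspine hr) (hsj.trans (hrq.trans hqj).symm)).not_gt hrs
  · obtain ⟨hpi, -⟩ := c.index_map_gapEmbedding hp
    obtain ⟨hri, -⟩ := c.index_map_gapEmbedding hr
    have hqp := c.index_eq_of_lt_of_lt hpq hqr (hpi.trans hri.symm)
    exact (c.le_of_mem_spine (hspine hq) (hri.trans (hqp.trans hpi).symm)).not_gt hqr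
  · obtain ⟨hpi, -⟩ := c.index_map_gapEmbedding hp
    obtain ⟨hri, -⟩ := c.index_map_gapEmbedding hr
    obtain ⟨hqj, -⟩ := c.index_map_gapEmbedding hq
    obtain rfl : j = i := hqj.symm.trans
      ((c.index_eq_of_lt_of_lt hpq hqr (hpi.trans hri.symm)).trans hpi)
    obtain ⟨p', hp', rfl⟩ := List.mem_map.1 hp
    obtain ⟨q', hq', rfl⟩ := List.mem_map.1 hq
    obtain ⟨r', hr', rfl⟩ := List.mem_map.1 hr
    obtain ⟨s', hs', rfl⟩ := List.mem_map.1 hs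
    simp only [OrderEmbedding.lt_iff_lt] at hpq hqr hrs
    exact (T j).2.2.2 ⟨p', q', r', s', hpq, hqr, hrs, l₁', hl₁', l₂', hl₂',
      fun h => hne (congrArg _ h), hp', hr', hq', hs'⟩

variable (c) in
def glue (L : {L : List (Fin (n + 1)) // L.Nodup ∧ L.toFinset = c.spine})
    (T : ∀ i, SetOfNCLists (c.blocksFun i - 1)) : SetOfNCLists (n + 1) :=
  ⟨c.glueLists L T, glueLists_ne_nil_nodup L.2, existsUnique_mem_glueLists L.2.2,
    not_crossing_glueLists L.2.2⟩

theorem exists_mem_spine (hL : L.toFinset = c.spine) : ∃ x ∈ L, x ∈ c.spine :=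
  ⟨Fin.last n, by rw [← List.mem_toFinset, hL]; exact c.last_mem_spine, c.last_mem_spine⟩

theorem eq_of_mem_glueLists {L' : List (Fin (n + 1))} (hL' : L'.toFinset = c.spine)
    (h : L' ∈ c.glueLists L T) : L' = L := by
  refine (mem_glueLists.1 h).resolve_right ?_
  rintro ⟨i, l', -, rfl⟩
  obtain ⟨x, hx, hxs⟩ := exists_mem_spine hL'
  exact (c.index_map_gapEmbedding hx).2 hxs

theorem map_gapEmbedding_mem_glueLists (hL : L.toFinset = c.spine) {i : Fin c.length}
    {l' : List (Fin (c.blocksFun i - 1))} :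
    l'.map (c.gapEmbedding i) ∈ c.glueLists L T ↔ l' ∈ (T i).1 := by
  refine ⟨fun h => ?_, fun h => mem_glueLists.2 (Or.inr ⟨i, l', h, rfl⟩)⟩
  rcases mem_glueLists.1 h with h | ⟨j, l'', hl'', h⟩
  · obtain ⟨x, hx, hxs⟩ := exists_mem_spine hL
    exact absurd hxs (c.index_map_gapEmbedding (h ▸ hx)).2
  · obtain ⟨y, hy⟩ := List.exists_mem_of_ne_nil _ ((T j).2.1 l'' hl'').1
    obtain rfl : j = i := (c.index_gapEmbedding j y).symm.trans
      (c.index_map_gapEmbedding (h ▸ List.mem_map_of_mem hy)).1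
    rwa [← List.map_injective_iff.2 (c.gapEmbedding j).injective h]

theorem glue_injective :
    Function.Injective fun p : {L : List (Fin (n + 1)) // L.Nodup ∧ L.toFinset = c.spine} ×
      (∀ i, SetOfNCLists (c.blocksFun i - 1)) => c.glue p.1 p.2 := by
  rintro ⟨L, T⟩ ⟨L', T'⟩ h
  have h' : c.glueLists L T = c.glueLists L' T' := congrArg Subtype.val h
  obtain rfl : L = L' :=
    Subtype.ext (eq_of_mem_glueLists (T := T') L.2.2 (h' ▸ mem_insert_self _ _))
  refine Prod.ext rfl (funext fun i => Subtype.ext (Finset.ext fun l' => ?_))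
  rw [← map_gapEmbedding_mem_glueLists L.2.2, h', map_gapEmbedding_mem_glueLists L.2.2]

theorem exists_forall_mem_range_gapEmbedding {S : SetOfNCLists (n + 1)} (hL : L ∈ S.1)
    (hLs : L.toFinset = c.spine) {l : List (Fin (n + 1))} (hl : l ∈ S.1) (hne : l ≠ L) :
    ∃ i, ∀ x ∈ l, x ∈ Set.range (c.gapEmbedding i) := by
  have hout : ∀ x ∈ l, x ∉ c.spine := fun x hx hxs =>
    hne ((S.2.2.1 x).unique ⟨hl, hx⟩ ⟨hL, by rwa [← List.mem_toFinset, hLs]⟩)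
  have hspine : ∀ i, c.blockLast i ∈ L := fun i => by
    rw [← List.mem_toFinset, hLs]
    exact mem_image_of_mem _ (mem_univ i)
  -- two points of `l` in different gaps would cross `L` at the gap ends
  have hsame : ∀ x ∈ l, ∀ y ∈ l, ¬ c.index x < c.index y := fun x hx y hy hxy =>
    S.2.2.2 ⟨x, _, y, _, c.lt_blockLast_index (hout x hx),
      c.lt_of_index_lt (by rwa [index_blockLast]),
      c.lt_blockLast_index (hout y hy), l, hl, L, hL, hne, hx, hy, hspine _, hspine _⟩
  obtain ⟨x₀, hx₀⟩ := List.exists_mem_of_ne_nil l (S.2.1 l hl).1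
  refine ⟨c.index x₀, fun x hx => c.mem_range_gapEmbedding.2 ⟨?_, hout x hx⟩⟩
  exact le_antisymm (not_lt.1 (hsame x₀ hx₀ x hx)) (not_lt.1 (hsame x hx x₀ hx₀))

theorem exists_glue_eq {S : SetOfNCLists (n + 1)} (hS : ∃ L ∈ S.1, L.toFinset = c.spine) :
    ∃ L T, c.glue L T = S := by
  obtain ⟨L, hL, hLs⟩ := hS
  have hclosed : ∀ i, ∀ l ∈ S.1, ∀ x ∈ l, ∀ y ∈ l, x ∈ Set.range (c.gapEmbedding i) →
      y ∈ Set.range (c.gapEmbedding i) := by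
    intro i l hl x hx y hy hxi
    have hne : l ≠ L := by
      rintro rfl
      exact (c.mem_range_gapEmbedding.1 hxi).2 (hLs ▸ List.mem_toFinset.2 hx)
    obtain ⟨j, hj⟩ := exists_forall_mem_range_gapEmbedding hL hLs hl hne
    obtain rfl : j = i :=
      (c.mem_range_gapEmbedding.1 (hj x hx)).1.symm.trans (c.mem_range_gapEmbedding.1 hxi).1
    exact hj y hy
  refine ⟨⟨L, (S.2.1 L hL).2, hLs⟩, fun i => S.comap (c.gapEmbedding i) (hclosed i),
    Subtype.ext (Finset.ext fun l => ?_)⟩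
  change l ∈ c.glueLists L _ ↔ l ∈ S.1
  rw [mem_glueLists]
  refine ⟨?_, fun hl => ?_⟩
  · rintro (rfl | ⟨i, l', hl', rfl⟩)
    · exact hL
    · exact SetOfNCLists.mem_comap.1 hl'
  · by_cases hne : l = L
    · exact Or.inl hne
    obtain ⟨i, hi⟩ := exists_forall_mem_range_gapEmbedding hL hLs hl hne
    obtain ⟨l', rfl⟩ : l ∈ Set.range (List.map (c.gapEmbedding i)) := by
      rw [Set.range_list_map]
      exact hi
    exact Or.inr ⟨i, l', SetOfNCLists.mem_comap.2 hl, rfl⟩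

variable (c) in
theorem natCard_setOfNCLists_spine :
    Nat.card {S : SetOfNCLists (n + 1) // ∃ L ∈ S.1, L.toFinset = c.spine} =
      c.length.factorial * ∏ i, u (c.blocksFun i - 1) := by
  let glue' (p : {L : List (Fin (n + 1)) // L.Nodup ∧ L.toFinset = c.spine} ×
      (∀ i, SetOfNCLists (c.blocksFun i - 1))) :
      {S : SetOfNCLists (n + 1) // ∃ L ∈ S.1, L.toFinset = c.spine} :=
    ⟨c.glue p.1 p.2, p.1, mem_insert_self _ _, p.1.2.2⟩
  have hbij : Function.Bijective glue' := by
    refine ⟨fun p q h => glue_injective (congrArg Subtype.val h), fun S => ?_⟩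
    obtain ⟨L, T, h⟩ := exists_glue_eq S.2
    exact ⟨(L, T), Subtype.ext h⟩
  rw [← Nat.card_congr (Equiv.ofBijective _ hbij), Nat.card_prod,
    Finset.natCard_nodup_toFinset_eq_factorial, card_spine, Nat.card_pi]
  rfl

end Glue

end Composition

theorem uk_eq_sum_natCard_spine (n k : ℕ) :
    uk n k = ∑ c : {c : Composition (n + 1) // c.length = k},
      Nat.card {S : SetOfNCLists (n + 1) // ∃ L ∈ S.1, L.toFinset = c.1.spine} := by
  have hlast : ∀ {c : Composition (n + 1)} {L : List (Fin (n + 1))}, L.toFinset = c.spine →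
      Fin.last n ∈ L := fun hLs => by
    rw [← List.mem_toFinset, hLs]
    exact Composition.last_mem_spine _
  let forget (p : Σ c : {c : Composition (n + 1) // c.length = k},
      {S : SetOfNCLists (n + 1) // ∃ L ∈ S.1, L.toFinset = c.1.spine}) :
      {S : SetOfNCLists (n + 1) // ∃ l ∈ S.1, Fin.last n ∈ l ∧ l.length = k} :=
    ⟨p.2.1, by
      obtain ⟨L, hL, hLs⟩ := p.2.2
      refine ⟨L, hL, hlast hLs, ?_⟩
      rw [← List.toFinset_card_of_nodup (p.2.1.2.1 L hL).2, hLs, Composition.card_spine,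
        p.1.2]⟩
  have hbij : Function.Bijective forget := by
    constructor
    · rintro ⟨⟨c, hc⟩, S, L, hL, hLs⟩ ⟨⟨c', hc'⟩, S', L', hL', hLs'⟩ h
      obtain rfl : S = S' := congrArg Subtype.val h
      obtain rfl : L = L' := (S.2.2.1 (Fin.last n)).unique ⟨hL, hlast hLs⟩ ⟨hL', hlast hLs'⟩
      obtain rfl : c = c' := Composition.spine_injective (hLs.symm.trans hLs')
      rfl
    · rintro ⟨S, l, hl, hl_last, hlen⟩
      obtain ⟨c, hc⟩ := Composition.exists_spine_eq (List.mem_toFinset.2 hl_last)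
      refine ⟨⟨⟨c, ?_⟩, S, l, hl, hc.symm⟩, rfl⟩
      rw [← Composition.card_spine, hc, List.toFinset_card_of_nodup (S.2.1 l hl).2, hlen]
  rw [uk, ← Nat.card_congr (Equiv.ofBijective _ hbij), Nat.card_sigma]

theorem uk_recurrence_general (n k : ℕ) (hkn : k ≤ n + 1) :
    uk n k = k.factorial *
      ∑ b ∈ Finset.Nat.antidiagonalTuple k (n + 1 - k), ∏ i, u (b i) := by
  rw [uk_eq_sum_natCard_spine, ← Composition.sum_prod_blocksFun_sub_one _ hkn, Finset.mul_sum]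
  refine Finset.sum_congr rfl fun ⟨c, hc⟩ _ => ?_
  subst hc
  exact c.natCard_setOfNCLists_spine

/-- `u(n,k) = k! ∑ u(b₁)⋯u(b_k)` summed over weak compositions `(b₁,…,b_k)` of
`n - k` into `k` nonnegative parts; stated here with ground set `[n+1]`
(so `n + 1` plays the role of `n ≥ 1` in the statement). -/
theorem uk_recurrence (n k : ℕ) (hk : 1 ≤ k) (hkn : k ≤ n + 1) :
    uk n k = k.factorial *
      ∑ b ∈ Finset.Nat.antidiagonalTuple k (n + 1 - k), ∏ i, u (b i) :=
  uk_recurrence_general n k hkn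
end

section
/- Let t(n) denote the sum, over all integer partitions π of n, of the product of the nonzero entries of the tuple obtained by subtracting 1 from each part of π (with the empty product equal to 1). Then the generating function sum_{n≥0} t(n) x^n equals (1/(1-x)) * prod_{k≥2} 1/(1-(k-1)x^k), and in particular t(0)=1, t(1)=1, t(2)=2, t(3)=4, t(4)=8, t(5)=14, t(6)=27. -/
/-- `t n` is the sum over integer partitions `π` of `n` of the product of the
nonzero entries of `π` with 1 subtracted from each part (parts equal to 1
contribute nothing; the empty product is 1). -/
def t (n : ℕ) : ℕ :=
  ∑ π : n.Partition, ((π.parts.filter (2 ≤ ·)).map (· - 1)).prod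

/-!
Give a part `k` the weight `w k = k - 1` for `k ≥ 2` and `w 1 = 1`. Then `t n` is the sum over
the partitions of `n` of the product of the weights of their parts, so by
`Nat.Partition.hasProd_genFun` its generating function is
`∏_{k ≥ 1} ∑_j (w k • X ^ k) ^ j = ∏_{k ≥ 1} (1 - w k • X ^ k)⁻¹`,
the factor `k = 1` being `(1 - X)⁻¹`. The factors with `k > n` are `1` modulo `X ^ (n + 1)`,
which turns the infinite product into the finite identity of the statement. Reading that
identity off in degrees `1, …, 6` gives a triangular system for `t 1, …, t 6`.
-/

open Finset PowerSeries PowerSeries.WithPiTopology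

def partWeight (k : ℕ) : ℕ := if 2 ≤ k then k - 1 else 1

theorem prod_map_partWeight (s : Multiset ℕ) :
    (s.map partWeight).prod = ((s.filter (2 ≤ ·)).map (· - 1)).prod := by
  conv_lhs => rw [← Multiset.filter_add_not (2 ≤ ·) s]
  rw [Multiset.map_add, Multiset.prod_add,
    Multiset.map_congr (f := partWeight) (g := (· - 1)) rfl
      fun k hk ↦ if_pos (Multiset.mem_filter.1 hk).2,
    Multiset.map_congr (f := partWeight) (g := fun _ ↦ 1) rfl
      fun k hk ↦ if_neg (Multiset.mem_filter.1 hk).2]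
  simp

variable {R : Type*}

theorem genFun_pow_partWeight [CommSemiring R] :
    Nat.Partition.genFun (fun k c ↦ (partWeight k : R) ^ c) =
      PowerSeries.mk fun n ↦ (t n : R) := by
  classical
  ext n
  rw [Nat.Partition.coeff_genFun, coeff_mk, t, Nat.cast_sum]
  refine sum_congr rfl fun π _ ↦ ?_
  rw [← prod_map_partWeight, prod_multiset_map_count, Nat.cast_prod, Finsupp.prod,
    Multiset.toFinsupp_support]
  simp [Multiset.toFinsupp_apply]

theorem constantCoeff_C_mul_X_pow_succ [CommSemiring R] (a : R) (k : ℕ) :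
    constantCoeff (C a * X ^ (k + 1)) = 0 := by
  simp

theorem dvd_prod_sub_one [CommRing R] {ι : Type*} {s : Finset ι} {f : ι → R} {a : R}
    (h : ∀ i ∈ s, a ∣ f i - 1) : a ∣ ∏ i ∈ s, f i - 1 := by
  rw [← Ideal.mem_span_singleton, ← Ideal.Quotient.eq, map_prod, map_one]
  refine prod_eq_one fun i hi ↦ ?_
  rw [← map_one (Ideal.Quotient.mk _), Ideal.Quotient.eq, Ideal.mem_span_singleton]
  exact h i hi

theorem coeff_mul_eq_of_X_pow_dvd_sub_one [CommRing R] {f g : R⟦X⟧} {n : ℕ}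
    (h : X ^ (n + 1) ∣ g - 1) : coeff n (f * g) = coeff n f := by
  have h' := X_pow_dvd_iff.1 (dvd_mul_of_dvd_right h f) n (lt_add_one n)
  rwa [mul_sub, mul_one, map_sub, sub_eq_zero] at h'

section Topological

variable [CommRing R] [TopologicalSpace R] [IsTopologicalRing R] [T2Space R]

theorem tsum_C_mul_X_pow_pow (a : R) (k : ℕ) :
    ∑' j, (C a * X ^ (k + 1)) ^ j = 1 + ∑' j, a ^ (j + 1) • X ^ ((k + 1) * (j + 1)) := by
  rw [(summable_pow_of_constantCoeff_eq_zero (constantCoeff_C_mul_X_pow_succ a k)).tsum_eq_zero_add,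
    pow_zero]
  congr 2 with j
  rw [mul_pow, ← map_pow, ← pow_mul, smul_eq_C_mul]

theorem X_pow_dvd_tsum_C_mul_X_pow_pow_sub_one (a : R) (k : ℕ) :
    X ^ (k + 1) ∣ ∑' j, (C a * X ^ (k + 1)) ^ j - 1 := by
  have h := one_sub_mul_tsum_pow_of_constantCoeff_eq_zero (constantCoeff_C_mul_X_pow_succ a k)
  exact ⟨C a * ∑' j, (C a * X ^ (k + 1)) ^ j, by linear_combination h⟩

theorem hasProd_tsum_pow_partWeight :
    HasProd (fun i ↦ ∑' j, (C (partWeight (i + 1) : R) * X ^ (i + 1)) ^ j)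
      (PowerSeries.mk fun n ↦ (t n : R)) := by
  have h := Nat.Partition.hasProd_genFun (fun k c ↦ (partWeight k : R) ^ c)
  rw [genFun_pow_partWeight] at h
  simpa only [tsum_C_mul_X_pow_pow] using h

theorem X_pow_dvd_mk_t_sub_prod (N : ℕ) :
    X ^ (N + 1) ∣ PowerSeries.mk (fun n ↦ (t n : R)) -
      ∏ i ∈ range N, ∑' j, (C (partWeight (i + 1) : R) * X ^ (i + 1)) ^ j := by
  rw [X_pow_dvd_iff]
  intro m hm
  have hlim := (tendsto_iff_coeff_tendsto _ _ _ _).1 (hasProd_tsum_pow_partWeight (R := R)) m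
  have hev : ∀ᶠ s in Filter.atTop,
      coeff m (∏ i ∈ s, ∑' j, (C (partWeight (i + 1) : R) * X ^ (i + 1)) ^ j) =
        coeff m (∏ i ∈ range N, ∑' j, (C (partWeight (i + 1) : R) * X ^ (i + 1)) ^ j) := by
    filter_upwards [Filter.eventually_ge_atTop (range N)] with s hs
    rw [← prod_sdiff hs, mul_comm]
    refine coeff_mul_eq_of_X_pow_dvd_sub_one (dvd_prod_sub_one fun i hi ↦ ?_)
    have hNi : N ≤ i := by simpa using (mem_sdiff.1 hi).2
    exact (pow_dvd_pow X (by omega)).trans (X_pow_dvd_tsum_C_mul_X_pow_pow_sub_one _ i)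
  rw [map_sub, sub_eq_zero]
  exact tendsto_nhds_unique hlim (tendsto_const_nhds.congr' (Filter.EventuallyEq.symm hev))

end Topological

theorem coeff_mk_t_mul_prod_one_sub [CommRing R] (n : ℕ) :
    coeff n (PowerSeries.mk (fun m ↦ (t m : R)) *
      ∏ i ∈ range n, (1 - C (partWeight (i + 1) : R) * X ^ (i + 1))) =
      if n = 0 then 1 else 0 := by
  let _ : TopologicalSpace R := ⊥
  have : DiscreteTopology R := ⟨rfl⟩
  have h := X_pow_dvd_iff.1 (dvd_mul_of_dvd_left (X_pow_dvd_mk_t_sub_prod (R := R) n)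
    (∏ i ∈ range n, (1 - C (partWeight (i + 1) : R) * X ^ (i + 1)))) n (lt_add_one n)
  rw [sub_mul, map_sub, sub_eq_zero, ← prod_mul_distrib] at h
  rw [h, prod_congr rfl fun i _ ↦ tsum_pow_mul_one_sub_of_constantCoeff_eq_zero
    (constantCoeff_C_mul_X_pow_succ (partWeight (i + 1) : R) i), prod_const_one, coeff_one]

theorem prod_range_succ_one_sub_partWeight [CommRing R] (n : ℕ) :
    ∏ i ∈ range (n + 1), (1 - C (partWeight (i + 1) : R) * X ^ (i + 1)) =
      (1 - X) * ∏ k ∈ Icc 2 (n + 1), (1 - C ((k : R) - 1) * X ^ k) := by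
  induction n with
  | zero => simp [partWeight]
  | succ n ih =>
    rw [prod_range_succ, ih, prod_Icc_succ_top (a := 2) (b := n + 1) (by omega), mul_assoc,
      partWeight, if_pos (by omega), Nat.add_sub_cancel]
    push_cast
    rw [add_sub_cancel_right]

theorem coeff_mul_one_sub_C_mul_X_pow [CommRing R] (f : R⟦X⟧) (a : R) (n k : ℕ) :
    coeff n (f * (1 - C a * X ^ k)) =
      coeff n f - if k ≤ n then a * coeff (n - k) f else 0 := by
  rw [mul_sub, mul_one, map_sub, mul_left_comm, coeff_C_mul, coeff_mul_X_pow']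
  split_ifs <;> simp

theorem t_values :
    t 0 = 1 ∧ t 1 = 1 ∧ t 2 = 2 ∧ t 3 = 4 ∧ t 4 = 8 ∧ t 5 = 14 ∧ t 6 = 27 := by
  have h := coeff_mk_t_mul_prod_one_sub (R := ℤ)
  have h0 := h 0
  have h1 := h 1
  have h2 := h 2
  have h3 := h 3
  have h4 := h 4
  have h5 := h 5
  have h6 := h 6
  simp only [prod_range_succ, prod_range_zero, mul_one, ← mul_assoc,
    coeff_mul_one_sub_C_mul_X_pow] at h0 h1 h2 h3 h4 h5 h6
  norm_num [partWeight, coeff_mk] at h0 h1 h2 h3 h4 h5 h6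
  omega

/-- Generating function identity
`∑ t(n) xⁿ = (1/(1-x)) ∏_{k≥2} 1/(1-(k-1)x^k)`, stated coefficientwise:
multiplying through, the coefficient of `xⁿ` in
`(∑ t(m) x^m)(1-x)∏_{k=2}^{n}(1-(k-1)x^k)` is `1` for `n = 0` and `0` otherwise
(factors with `k > n` do not affect the coefficient of `xⁿ`).  In particular
`t(0),…,t(6) = 1, 1, 2, 4, 8, 14, 27`. -/
theorem t_generating_function :
    (∀ n : ℕ, PowerSeries.coeff (R := ℤ) n
        ((PowerSeries.mk fun m => (t m : ℤ)) * (1 - PowerSeries.X) *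
          ∏ k ∈ Finset.Icc 2 n,
            (1 - PowerSeries.C (R := ℤ) ((k : ℤ) - 1) * PowerSeries.X ^ k)) =
      if n = 0 then 1 else 0) ∧
    t 0 = 1 ∧ t 1 = 1 ∧ t 2 = 2 ∧ t 3 = 4 ∧ t 4 = 8 ∧ t 5 = 14 ∧ t 6 = 27 := by
  refine ⟨fun n ↦ ?_, t_values⟩
  cases n with
  | zero => simp [coeff_zero_eq_constantCoeff, t_values.1]
  | succ n =>
    rw [mul_assoc, ← prod_range_succ_one_sub_partWeight, coeff_mk_t_mul_prod_one_sub]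
end
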